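/- In the infinite hexagonal grid, the number of vertices at graph distance at most r from a fixed vertex v, excluding v itself, equals 3·(r+1 choose 2) = 3r(r+1)/2. -/

import Mathlib

/-- The hexagonal grid (honeycomb lattice), in "brick wall" coordinates on `ℤ²`:
every vertex `(x,y)` is adjacent to `(x±1,y)`, and there is a vertical edge
between `(x,y)` and `(x,y+1)` exactly when `x + y` is even. This is the infinite
3-regular plane graph dual to the triangular tessellation. -/
def hexGraph : SimpleGraph (ℤ × ℤ) where
  Adj u v := (u.2 = v.2 ∧ (u.1 - v.1 = 1 ∨ u.1 - v.1 = -1)) ∨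
    (u.1 = v.1 ∧ ((u.2 - v.2 = 1 ∧ (v.1 + v.2) % 2 = 0) ∨ (v.2 - u.2 = 1 ∧ (u.1 + u.2) % 2 = 0)))
  symm := ⟨by intro u v h; omega⟩
  loopless := ⟨by intro v h; omega⟩

/-! In brick-wall coordinates the distance from the origin (a vertex with an upward edge) is
`hexDist (x, y) = max (|x| + |y|) |2y - (x + y) % 2|`: it changes by at most one along edges, and
every other vertex has a neighbour one step closer. A translation, composed with the reflection
`y ↦ -y` when `v` has no upward edge, is an automorphism moving `v` to the origin.

Writing the vertices with `x + y` even as `(s + t, s - t)` and the others as `(s + t + 1, s - t)`,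
the ball of radius `r` becomes two lattice hexagons `{(s, t) | s, t, t - s ∈ I}`, for
`I = [-k, k]` and `I = [-n, n)` with `k = ⌊r/2⌋`, `n = ⌈r/2⌉`. Counted column by column they
have `3k² + 3k + 1` and `3n²` points, together `1 + 3 * (r + 1).choose 2`. -/

open Finset

namespace SimpleGraph

variable {V : Type*} {G : SimpleGraph V} {f : V → ℕ}

lemma Walk.apply_le_apply_add_length (hle : ∀ a b, G.Adj a b → f b ≤ f a + 1) {u v : V}
    (w : G.Walk u v) : f v ≤ f u + w.length := by
  induction w with
  | nil => simp
  | cons h _ ih => rw [Walk.length_cons]; linarith [hle _ _ h]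

lemma exists_walk_length_eq_of_descent {u : V} (h0 : f u = 0)
    (hdesc : ∀ v ≠ u, ∃ w, G.Adj w v ∧ f w + 1 = f v) (v : V) :
    ∃ w : G.Walk u v, w.length = f v := by
  induction hn : f v using Nat.strong_induction_on generalizing v with
  | _ n ih =>
    by_cases hv : v = u
    · subst hv
      exact ⟨.nil, by simp [← hn, h0]⟩
    · obtain ⟨w, hw, hfw⟩ := hdesc v hv
      obtain ⟨q, hq⟩ := ih (f w) (by omega) w rfl
      exact ⟨q.concat hw, by rw [Walk.length_concat]; omega⟩

lemma dist_eq_of_descent {u : V} (h0 : f u = 0) (hle : ∀ a b, G.Adj a b → f b ≤ f a + 1)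
    (hdesc : ∀ v ≠ u, ∃ w, G.Adj w v ∧ f w + 1 = f v) (v : V) : G.dist u v = f v := by
  obtain ⟨w, hw⟩ := exists_walk_length_eq_of_descent h0 hdesc v
  obtain ⟨q, hq⟩ := w.reachable.exists_walk_length_eq_dist
  have := q.apply_le_apply_add_length hle
  exact le_antisymm (hw ▸ dist_le w) (by omega)

end SimpleGraph

lemma hexGraph_adj {a b : ℤ × ℤ} : hexGraph.Adj a b ↔
    (a.2 = b.2 ∧ (a.1 - b.1 = 1 ∨ a.1 - b.1 = -1)) ∨
    (a.1 = b.1 ∧ ((a.2 - b.2 = 1 ∧ (b.1 + b.2) % 2 = 0) ∨ (b.2 - a.2 = 1 ∧ (a.1 + a.2) % 2 = 0))) :=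
  Iff.rfl

def hexDist (p : ℤ × ℤ) : ℕ :=
  max (p.1.natAbs + p.2.natAbs) (2 * p.2 - (p.1 + p.2) % 2).natAbs

lemma hexDist_le_succ_of_adj {a b : ℤ × ℤ} (h : hexGraph.Adj a b) : hexDist b ≤ hexDist a + 1 := by
  rw [hexGraph_adj] at h
  simp only [hexDist]
  omega

set_option maxHeartbeats 400000 in
lemma exists_adj_hexDist_succ {p : ℤ × ℤ} (hp : p ≠ 0) :
    ∃ q, hexGraph.Adj q p ∧ hexDist q + 1 = hexDist p := by
  obtain ⟨x, y⟩ := p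
  rw [ne_eq, Prod.mk_eq_zero, not_and_or] at hp
  by_cases hv : y < 0 ∧ (x + y) % 2 = 0 ∨ 0 < y ∧ (x + y) % 2 = 1
  · exact ⟨(x, y + 1 - 2 * ((x + y) % 2)), by rw [hexGraph_adj]; dsimp only; omega,
      by simp only [hexDist]; omega⟩
  · obtain hx | hx := le_or_gt x 0
    · exact ⟨(x + 1, y), by rw [hexGraph_adj]; dsimp only; omega, by simp only [hexDist]; omega⟩
    · exact ⟨(x - 1, y), by rw [hexGraph_adj]; dsimp only; omega, by simp only [hexDist]; omega⟩

def hexRecenter (v : ℤ × ℤ) : hexGraph ≃g hexGraph where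
  toEquiv := (Equiv.subRight v.1).prodCongr
    (if (v.1 + v.2) % 2 = 0 then Equiv.subRight v.2 else Equiv.subLeft v.2)
  map_rel_iff' {a b} := by
    simp only [hexGraph_adj, Equiv.prodCongr_apply, Prod.map]
    split_ifs <;> simp only [Equiv.subRight_apply, Equiv.subLeft_apply] <;> omega

lemma hexRecenter_self (v : ℤ × ℤ) : hexRecenter v v = 0 := by
  simp only [hexRecenter]
  split_ifs <;> simp [Prod.map]

lemma hexGraph_dist (v p : ℤ × ℤ) : hexGraph.dist v p = hexDist (hexRecenter v p) := by
  refine SimpleGraph.dist_eq_of_descent (f := hexDist ∘ hexRecenter v)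
    (by simp [hexRecenter_self, hexDist])
    (fun a b h => hexDist_le_succ_of_adj ((hexRecenter v).map_adj_iff.2 h)) (fun p hp => ?_) p
  have : hexRecenter v p ≠ 0 := by
    rwa [← hexRecenter_self v, (hexRecenter v).injective.ne_iff]
  obtain ⟨q, hq, hd⟩ := exists_adj_hexDist_succ this
  refine ⟨(hexRecenter v).symm q, ?_, by simpa using hd⟩
  rwa [← (hexRecenter v).map_adj_iff, RelIso.apply_symm_apply]

def latticeHexagon (I : Finset ℤ) : Finset (ℤ × ℤ) :=
  (I ×ˢ I).filter fun q => q.2 - q.1 ∈ I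

lemma mem_latticeHexagon {I : Finset ℤ} {q : ℤ × ℤ} :
    q ∈ latticeHexagon I ↔ q.1 ∈ I ∧ q.2 ∈ I ∧ q.2 - q.1 ∈ I := by
  simp [latticeHexagon, and_assoc]

lemma card_latticeHexagon (I : Finset ℤ) :
    #(latticeHexagon I) = ∑ s ∈ I, #(I.filter fun t => t - s ∈ I) := by
  simp only [latticeHexagon, card_filter, sum_product]

lemma card_filter_sub_mem_Ico {a b : ℕ} {s : ℤ} (hs : s ∈ Ico (-a : ℤ) b) :
    #((Ico (-a : ℤ) b).filter fun t => t - s ∈ Ico (-a : ℤ) b) = a + b - s.natAbs := by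
  rw [mem_Ico] at hs
  have : (Ico (-a : ℤ) b).filter (fun t => t - s ∈ Ico (-a : ℤ) b) =
      Ico (max (-(a : ℤ)) (s - a)) (min b (s + b)) := by
    ext t
    simp only [mem_filter, mem_Ico, max_le_iff, lt_min_iff]
    omega
  rw [this, Int.card_Ico]
  omega

lemma sum_natAbs_Ico (a b : ℕ) :
    ∑ s ∈ Ico (-a : ℤ) b, s.natAbs = (a + 1).choose 2 + b.choose 2 := by
  induction b with
  | zero =>
    induction a with
    | zero => simp
    | succ a ih =>
      have : (a + 1 + 1).choose 2 = (a + 1).choose 2 + (a + 1) := by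
        rw [Nat.choose_succ_succ' (a + 1) 1, Nat.choose_one_right, add_comm]
      rw [Nat.cast_zero, Nat.choose_zero_succ, add_zero] at ih ⊢
      rw [Nat.cast_succ, neg_add', ← insert_Ico_left_eq_Ico_sub_one (by omega),
        sum_insert (by simp), ih, this]
      omega
  | succ b ih =>
    rw [Nat.cast_succ, ← insert_Ico_right_eq_Ico_add_one (by omega), sum_insert right_notMem_Ico,
      ih, Nat.choose_succ_succ' b 1, Nat.choose_one_right, Int.natAbs_natCast]
    ring

lemma card_latticeHexagon_Ico (a b : ℕ) :
    #(latticeHexagon (Ico (-a : ℤ) b)) + ((a + 1).choose 2 + b.choose 2) = (a + b) ^ 2 := by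
  rw [card_latticeHexagon, sum_congr rfl fun s hs => card_filter_sub_mem_Ico hs,
    ← sum_natAbs_Ico, ← sum_add_distrib, sum_congr rfl fun s hs => Nat.sub_add_cancel ?_,
    sum_const, Int.card_Ico, smul_eq_mul, sq]
  · congr 1
    omega
  · rw [mem_Ico] at hs
    omega

noncomputable def hexBall (r : ℕ) : Finset (ℤ × ℤ) :=
  ((Icc (-r : ℤ) r) ×ˢ (Icc (-r : ℤ) r)).filter fun p => hexDist p ≤ r

lemma mem_hexBall {r : ℕ} {p : ℤ × ℤ} : p ∈ hexBall r ↔ hexDist p ≤ r := by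
  simp only [hexBall, mem_filter, mem_product, mem_Icc, and_iff_right_iff_imp]
  simp only [hexDist]
  omega

lemma filter_even_hexBall (r : ℕ) :
    (hexBall r).filter (fun p => (p.1 + p.2) % 2 = 0) =
      (latticeHexagon (Ico (-(r / 2 : ℕ) : ℤ) (r / 2 + 1 : ℕ))).image
        fun q => (q.1 + q.2, q.1 - q.2) := by
  ext ⟨x, y⟩
  simp only [mem_filter, mem_hexBall, mem_image, mem_latticeHexagon, mem_Ico, Prod.ext_iff,
    hexDist, Prod.exists]
  constructor
  · rintro ⟨hd, hp⟩
    exact ⟨(x + y) / 2, (x - y) / 2, by omega⟩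
  · rintro ⟨s, t, hst, rfl, rfl⟩
    omega

lemma filter_odd_hexBall (r : ℕ) :
    (hexBall r).filter (fun p => ¬(p.1 + p.2) % 2 = 0) =
      (latticeHexagon (Ico (-((r + 1) / 2 : ℕ) : ℤ) ((r + 1) / 2 : ℕ))).image
        fun q => (q.1 + q.2 + 1, q.1 - q.2) := by
  ext ⟨x, y⟩
  simp only [mem_filter, mem_hexBall, mem_image, mem_latticeHexagon, mem_Ico, Prod.ext_iff,
    hexDist, Prod.exists]
  constructor
  · rintro ⟨hd, hp⟩
    exact ⟨(x + y - 1) / 2, (x - y - 1) / 2, by omega⟩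
  · rintro ⟨s, t, hst, rfl, rfl⟩
    omega

lemma card_hexBall (r : ℕ) : #(hexBall r) = 3 * (r + 1).choose 2 + 1 := by
  have hinj (c : ℤ) : Function.Injective fun q : ℤ × ℤ => (q.1 + q.2 + c, q.1 - q.2) :=
    fun q q' h => by simp only [Prod.ext_iff] at h ⊢; omega
  rw [← card_filter_add_card_filter_not (fun p => (p.1 + p.2) % 2 = 0), filter_even_hexBall,
    filter_odd_hexBall, card_image_of_injective _ (by simpa using hinj 0),
    card_image_of_injective _ (hinj 1)]
  have heven := card_latticeHexagon_Ico (r / 2) (r / 2 + 1)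
  have hodd := card_latticeHexagon_Ico ((r + 1) / 2) ((r + 1) / 2)
  obtain ⟨k, rfl | rfl⟩ := Nat.even_or_odd' r
  · rw [show 2 * k / 2 = k by omega, show (2 * k + 1) / 2 = k by omega] at *
    qify at heven hodd ⊢
    push_cast [Nat.cast_choose_two] at heven hodd ⊢
    linarith
  · rw [show (2 * k + 1) / 2 = k by omega, show (2 * k + 1 + 1) / 2 = k + 1 by omega] at *
    qify at heven hodd ⊢
    push_cast [Nat.cast_choose_two] at heven hodd ⊢
    linarith

/-- In the infinite hexagonal grid, the number of vertices at graph distance at most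
`r` from a fixed vertex `v`, excluding `v` itself, equals `3·(r+1 choose 2) = 3r(r+1)/2`. -/
theorem hex_grid_ball_card (v : ℤ × ℤ) (r : ℕ) :
    ({p : ℤ × ℤ | p ≠ v ∧ hexGraph.dist v p ≤ r}).ncard = 3 * (r + 1).choose 2 ∧
      3 * (r + 1).choose 2 = 3 * r * (r + 1) / 2 := by
  have hball : {p : ℤ × ℤ | p ≠ v ∧ hexGraph.dist v p ≤ r} =
      hexRecenter v ⁻¹' ↑((hexBall r).erase 0) := by
    ext p
    simp only [Set.mem_ofPred_eq, Set.mem_preimage, coe_erase, Set.mem_sdiff, mem_coe, mem_hexBall,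
      Set.mem_singleton_iff, hexGraph_dist]
    rw [← hexRecenter_self v, (hexRecenter v).injective.eq_iff]
    tauto
  refine ⟨?_, ?_⟩
  · rw [hball, Set.ncard_preimage_of_injective_subset_range (hexRecenter v).injective (by simp),
      Set.ncard_coe_finset, card_erase_of_mem (mem_hexBall.2 (Nat.zero_le _)), card_hexBall,
      Nat.add_sub_cancel]
  · have h : 2 ∣ r * (r + 1) := (Nat.even_mul_succ_self r).two_dvd
    rw [Nat.choose_two_right, Nat.add_sub_cancel, mul_comm (r + 1) r, ← Nat.mul_div_assoc 3 h,
      mul_assoc]
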